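/- arXiv:1010.5739 — 2 statements merged into one kernel-verified Lean document; each statement's English description precedes it below -/
import Mathlib

section
/- If d : A^n → A is a weakly progressive block map, then the induced sliding block code τ_d : A^ℕ → A^ℕ is a local homeomorphism. -/
/-- The sliding block code induced by a block map `d : A^n → A`. -/
def tau {A : Type*} {n : ℕ} (d : (Fin n → A) → A) : (ℕ → A) → (ℕ → A) :=
  fun x i => d fun j => x (i + j)

/-- The sequence `μ₁ ⋯ μₙ a α₁ α₂ ⋯` starting with the word `μ`, followed by the
letter `a`, followed by the (infinite) tail `α`. -/
def seqOf {A : Type*} (n : ℕ) (μ : Fin n → A) (a : A) (α : ℕ → A) : ℕ → A :=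
  fun k => if h : k < n then μ ⟨k, h⟩ else if k = n then a else α (k - (n + 1))

/-- A block map `d : A^(n+1) → A` is weakly progressive of order `m+1` if for every word
`μ ∈ A^(n+1)` and every `ν ∈ A^(m+1)` with `d μ = ν₁`, there is a unique `a ∈ A` such that
`d(μ₁⋯μₙ a) d(μ₂⋯μₙ a α₁) ⋯ = ν` has a solution `α`. -/
def WeaklyProgressive {A : Type*} {n : ℕ} (d : (Fin (n + 1) → A) → A) (m : ℕ) : Prop :=
  ∀ (μ : Fin (n + 1) → A) (ν : Fin (m + 1) → A), d μ = ν 0 →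
    ∃! a : A, ∃ α : ℕ → A,
      ∀ i : Fin (m + 1), tau d (seqOf n (fun j : Fin n => μ j.castSucc) a α) (i : ℕ) = ν i

section Aux

variable {A : Type*} {n : ℕ}

/-- append a letter to a word -/
def snocFun (w : Fin n → A) (a : A) : Fin (n + 1) → A :=
  fun i => if h : (i : ℕ) < n then w ⟨i, h⟩ else a

lemma snocFun_castSucc (w : Fin n → A) (a : A) (j : Fin n) :
    snocFun w a j.castSucc = w j := by
  simp [snocFun, j.isLt]

lemma seqOf_window0 (w : Fin n → A) (a : A) (α : ℕ → A) :
    (fun j : Fin (n + 1) => seqOf n w a α (0 + (j : ℕ))) = snocFun w a := by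
  funext j
  have hj := j.isLt
  simp only [seqOf, snocFun, Nat.zero_add]
  split_ifs with h1 h2
  · rfl
  · rfl
  · exfalso; omega

lemma seqOf_window1 (w : Fin n → A) (a : A) (α : ℕ → A) :
    (fun j : Fin (n + 1) => seqOf n w a α (1 + (j : ℕ)))
      = snocFun (fun i : Fin n => snocFun w a i.succ) (α 0) := by
  funext j
  have hj := j.isLt
  rw [show 1 + (j : ℕ) = (j : ℕ) + 1 from Nat.add_comm _ _]
  simp only [seqOf, snocFun, Fin.val_succ]
  split_ifs <;>
    first
      | rfl
      | (exfalso; omega)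
      | (congr 1; omega)

lemma seqOf_shift (y : ℕ → A) (j : ℕ) :
    seqOf n (fun i : Fin n => y (j + (i : ℕ))) (y (j + n)) (fun t => y (j + n + 1 + t))
      = fun t => y (j + t) := by
  funext t
  simp only [seqOf]
  split_ifs with h1 h2
  · rfl
  · rw [h2]
  · congr 1; omega

lemma tau_shift (d : (Fin (n + 1) → A) → A) (y : ℕ → A) (j k : ℕ) :
    tau d (fun t => y (j + t)) k = tau d y (j + k) := by
  simp only [tau]
  congr 1
  funext l
  congr 1
  omega

variable (d : (Fin (n + 1) → A) → A) {m : ℕ}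

lemma tau_inj (hd : WeaklyProgressive d m) (y z : ℕ → A)
    (h0 : ∀ i, i < n → y i = z i) (hyz : tau d y = tau d z) : y = z := by
  funext k
  induction k using Nat.strong_induction_on with
  | _ k ih =>
    rcases Nat.lt_or_ge k n with hk | hk
    · exact h0 k hk
    · set j := k - n with hjdef
      have hkj : k = j + n := by omega
      obtain ⟨a, -, hu⟩ := hd (fun i : Fin (n + 1) => y (j + (i : ℕ)))
        (fun i : Fin (m + 1) => tau d y (j + (i : ℕ))) (by simp [tau])
      have hcast : (fun jj : Fin n =>
          (fun i : Fin (n + 1) => y (j + (i : ℕ))) jj.castSucc)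
            = fun i : Fin n => y (j + (i : ℕ)) := rfl
      have hy : y (j + n) = a := by
        apply hu
        refine ⟨fun t => y (j + n + 1 + t), fun i => ?_⟩
        rw [hcast, seqOf_shift, tau_shift]
      have hz : z (j + n) = a := by
        apply hu
        refine ⟨fun t => z (j + n + 1 + t), fun i => ?_⟩
        have hyzw : (fun i : Fin n => y (j + (i : ℕ))) = fun i : Fin n => z (j + (i : ℕ)) := by
          funext i
          exact ih (j + (i : ℕ)) (by have := i.isLt; omega)
        rw [hcast, hyzw, seqOf_shift, tau_shift, ← hyz]
      rw [hkj, hy, hz]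

lemma tau_assemble (x ν : ℕ → A) (w : ℕ → Fin n → A) (a : ℕ → A)
    (h0 : w 0 = fun i : Fin n => x (i : ℕ))
    (hstep : ∀ k, w (k + 1) = fun i : Fin n => snocFun (w k) (a k) i.succ)
    (hout : ∀ k, d (snocFun (w k) (a k)) = ν k) :
    ∃ z : ℕ → A, (∀ i, i < n → z i = x i) ∧ tau d z = ν := by
  set z : ℕ → A := fun k => if h : k < n then x k else a (k - n) with hzdef
  refine ⟨z, fun i hi => by simp [hzdef, hi], ?_⟩
  have L : ∀ k (i : Fin n), w k i = z (k + (i : ℕ)) := by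
    intro k
    induction k with
    | zero =>
      intro i
      have hi := i.isLt
      simp [hzdef, h0, hi]
    | succ k ih =>
      intro i
      have hi := i.isLt
      rw [hstep k]
      simp only [snocFun, Fin.val_succ]
      split_ifs with h
      · rw [ih ⟨(i : ℕ) + 1, h⟩]
        congr 1
        simp only [Fin.val_mk]
        omega
      · have h1 : (i : ℕ) + 1 = n := by omega
        simp only [hzdef]
        rw [dif_neg (by omega)]
        congr 1
        omega
  funext k
  show d (fun l : Fin (n + 1) => z (k + (l : ℕ))) = ν k
  rw [← hout k]
  congr 1
  funext l
  rcases Nat.lt_or_ge (l : ℕ) n with hl | hl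
  · rw [show z (k + (l : ℕ)) = w k ⟨(l : ℕ), hl⟩ from (L k ⟨(l : ℕ), hl⟩).symm]
    simp [snocFun, hl]
  · have hln : (l : ℕ) = n := by omega
    simp only [snocFun]
    rw [dif_neg (by omega)]
    simp only [hzdef]
    rw [dif_neg (by omega)]
    congr 1
    omega

lemma tau_build [Fintype A] [Nonempty A] (hd : WeaklyProgressive d m) (x ν : ℕ → A)
    (hb : ∃ b, d (snocFun (fun i : Fin n => x (i : ℕ)) b) = ν 0) :
    ∃ z : ℕ → A, (∀ i, i < n → z i = x i) ∧ tau d z = ν := by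
  rcases m with _ | m'
  · -- order 1 : the last-letter maps are injective, hence surjective
    have hinj : ∀ w : Fin n → A, Function.Injective fun c => d (snocFun w c) := by
      intro w c₁ c₂ hc
      obtain ⟨a, -, hu⟩ := hd (snocFun w c₁) (fun _ => d (snocFun w c₁)) rfl
      have hcast : (fun j : Fin n => snocFun w c₁ j.castSucc) = w := by
        funext j; exact snocFun_castSucc w c₁ j
      have key : ∀ c : A, d (snocFun w c) = d (snocFun w c₁) →
          (∃ α : ℕ → A, ∀ i : Fin 1,
            tau d (seqOf n (fun j : Fin n => snocFun w c₁ j.castSucc) c α) (i : ℕ)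
              = d (snocFun w c₁)) := by
        intro c hcc
        refine ⟨fun _ => Classical.arbitrary A, fun i => ?_⟩
        have hi0 : (i : ℕ) = 0 := by omega
        rw [hcast, hi0]
        show d (fun j : Fin (n + 1) =>
          seqOf n w c (fun _ => Classical.arbitrary A) (0 + (j : ℕ))) = _
        rw [seqOf_window0]
        exact hcc
      have e1 : c₁ = a := hu c₁ (key c₁ rfl)
      have e2 : c₂ = a := hu c₂ (key c₂ hc.symm)
      rw [e1, e2]
    have hsurj : ∀ w : Fin n → A, Function.Surjective fun c => d (snocFun w c) :=
      fun w => Finite.injective_iff_surjective.mp (hinj w)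
    choose g hg using hsurj
    let W : ℕ → Fin n → A := fun k =>
      Nat.rec (fun i : Fin n => x (i : ℕ))
        (fun k wk => fun i : Fin n => snocFun wk (g wk (ν k)) i.succ) k
    exact tau_assemble d x ν W (fun k => g (W k) (ν k)) rfl (fun k => rfl)
      (fun k => hg (W k) (ν k))
  · -- order ≥ 2 : build step by step
    have key : ∀ (w : Fin n → A) (b : A) (k : ℕ), d (snocFun w b) = ν k →
        ∃ a b', d (snocFun w a) = ν k ∧
          d (snocFun (fun i : Fin n => snocFun w a i.succ) b') = ν (k + 1) := by
      intro w b k hp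
      obtain ⟨a, ⟨α, hα⟩, -⟩ := hd (snocFun w b)
        (fun i : Fin (m' + 1 + 1) => ν (k + (i : ℕ))) (by simpa using hp)
      have hcast : (fun j : Fin n => snocFun w b j.castSucc) = w := by
        funext j; exact snocFun_castSucc w b j
      rw [hcast] at hα
      refine ⟨a, α 0, ?_, ?_⟩
      · have h0 := hα 0
        simp only [Fin.val_zero, Nat.add_zero] at h0
        rw [← h0]
        show _ = d (fun j : Fin (n + 1) => seqOf n w a α (0 + (j : ℕ)))
        rw [seqOf_window0]
      · have h1 := hα 1
        have hv1 : ((1 : Fin (m' + 1 + 1)) : ℕ) = 1 := rfl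
        rw [hv1] at h1
        rw [← h1]
        show _ = d (fun j : Fin (n + 1) => seqOf n w a α (1 + (j : ℕ)))
        rw [seqOf_window1]
    choose stepA stepB hA hB using key
    let S : ∀ _ : ℕ, {p : (Fin n → A) × A // d (snocFun p.1 p.2) = ν _} :=
      fun k => Nat.rec (motive := fun k => {p : (Fin n → A) × A // d (snocFun p.1 p.2) = ν k})
        ⟨(fun i : Fin n => x (i : ℕ), hb.choose), hb.choose_spec⟩
        (fun k p => ⟨(fun i : Fin n => snocFun p.1.1 (stepA p.1.1 p.1.2 k p.2) i.succ,
                      stepB p.1.1 p.1.2 k p.2),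
                     hB p.1.1 p.1.2 k p.2⟩) k
    exact tau_assemble d x ν (fun k => (S k).1.1)
      (fun k => stepA (S k).1.1 (S k).1.2 k (S k).2)
      rfl (fun k => rfl) (fun k => hA (S k).1.1 (S k).1.2 k (S k).2)

end Aux

theorem weakly_progressive_local_homeo {A : Type*} [Fintype A] [Nonempty A]
    [TopologicalSpace A] [DiscreteTopology A] {n : ℕ}
    (d : (Fin (n + 1) → A) → A) (m : ℕ) (hd : WeaklyProgressive d m) :
    IsLocalHomeomorph (tau d) := by
  rw [isLocalHomeomorph_iff_isOpenEmbedding_restrict]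
  intro x
  have htau_cont : Continuous (tau d) := by
    apply continuous_pi
    intro i
    exact (continuous_of_discreteTopology (f := d)).comp
      (continuous_pi fun j : Fin (n + 1) => continuous_apply (i + (j : ℕ)))
  set U : Set (ℕ → A) := {y | ∀ i, i < n → y i = x i} with hUdef
  have hUeq : U = ⋂ i : Fin n, (fun y : ℕ → A => y (i : ℕ)) ⁻¹' {x (i : ℕ)} := by
    ext y
    simp only [hUdef, Set.mem_setOf_eq, Set.mem_iInter, Set.mem_preimage,
      Set.mem_singleton_iff]
    exact ⟨fun h i => h i i.isLt, fun h i hi => h ⟨i, hi⟩⟩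
  have hUopen : IsOpen U := by
    rw [hUeq]
    exact isOpen_iInter_of_finite fun i =>
      (continuous_apply ((i : ℕ))).isOpen_preimage _ (isOpen_discrete _)
  have hUclosed : IsClosed U := by
    rw [hUeq]
    exact isClosed_iInter fun i =>
      IsClosed.preimage (continuous_apply _) (isClosed_singleton)
  have hxU : x ∈ U := fun i _ => rfl
  refine ⟨U, hUopen.mem_nhds hxU, ?_⟩
  have hinj : Set.InjOn (tau d) U := by
    intro y hy z hz hyz
    exact tau_inj d hd y z (fun i hi => (hy i hi).trans (hz i hi).symm) hyz
  have himg : tau d '' U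
      = (fun ν : ℕ → A => ν 0) ⁻¹'
        (Set.range fun c => d (snocFun (fun i : Fin n => x (i : ℕ)) c)) := by
    ext ν
    constructor
    · rintro ⟨y, hy, rfl⟩
      refine ⟨y n, ?_⟩
      show d _ = tau d y 0
      show d _ = d (fun j : Fin (n + 1) => y (0 + (j : ℕ)))
      congr 1
      funext j
      simp only [snocFun, Nat.zero_add]
      split_ifs with h
      · exact (hy (j : ℕ) h).symm
      · congr 1
        have := j.isLt
        omega
    · rintro ⟨c, hc⟩
      obtain ⟨z, hz1, hz2⟩ := tau_build d hd x ν ⟨c, hc⟩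
      exact ⟨z, hz1, hz2⟩
  haveI : CompactSpace ↥U := isCompact_iff_compactSpace.mp hUclosed.isCompact
  have hcont : Continuous (U.restrict (tau d)) := htau_cont.comp continuous_subtype_val
  have hrinj : Function.Injective (U.restrict (tau d)) := by
    intro p q hpq
    exact Subtype.ext (hinj p.2 q.2 hpq)
  have hce := hcont.isClosedEmbedding hrinj
  refine ⟨hce.toIsEmbedding, ?_⟩
  rw [Set.range_restrict, himg]
  exact (continuous_apply 0).isOpen_preimage _ (isOpen_discrete _)
end

section
/- If the sliding block code φ : A^ℕ → A^ℕ is a local homeomorphism that *-commutes with the shift σ, then φ is surjective and there exists k ∈ ℕ such that every point of A^ℕ has exactly k preimages under φ. -/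
/-- The one-sided shift map. -/
def shift {A : Type*} : (ℕ → A) → (ℕ → A) := fun x i => x (i + 1)

section Aux

variable {A : Type*} [Fintype A] [Nonempty A] [TopologicalSpace A] [DiscreteTopology A]

/-- Cylinder of length `L` around `p`. -/
def cyl (p : ℕ → A) (L : ℕ) : Set (ℕ → A) := {y | ∀ i < L, y i = p i}

lemma self_mem_cyl (p : ℕ → A) (L : ℕ) : p ∈ cyl p L := fun _ _ => rfl

lemma cyl_antitone (p : ℕ → A) {L L' : ℕ} (h : L ≤ L') : cyl p L' ⊆ cyl p L :=
  fun _ hy i hi => hy i (lt_of_lt_of_le hi h)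

lemma isOpen_cyl (p : ℕ → A) (L : ℕ) : IsOpen (cyl p L) := by
  have : cyl p L = ⋂ i ∈ Finset.range L, (fun y : ℕ → A => y i) ⁻¹' {p i} := by
    ext y
    simp [cyl, Set.mem_iInter]
  rw [this]
  exact isOpen_biInter_finset fun i _ =>
    (continuous_apply i).isOpen_preimage _ (isOpen_discrete _)

lemma exists_cyl_subset {p : ℕ → A} {U : Set (ℕ → A)} (hU : IsOpen U) (hp : p ∈ U) :
    ∃ L, cyl p L ⊆ U := by
  obtain ⟨I, u, hu, hsub⟩ := isOpen_pi_iff.mp hU p hp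
  refine ⟨(I.sup id) + 1, fun y hy => hsub ?_⟩
  intro i hi
  have : y i = p i := hy i (Nat.lt_succ_of_le (Finset.le_sup (f := id) hi))
  rw [this]
  exact (hu i hi).2

lemma shift_iterate_apply (u : ℕ → A) (n i : ℕ) : (shift^[n] u) i = u (i + n) := by
  induction n generalizing u i with
  | zero => rfl
  | succ n ih =>
    rw [Function.iterate_succ_apply, ih]
    show u (i + n + 1) = u (i + (n + 1))
    ring_nf

end Aux

theorem local_homeo_star_commute_k_to_one {A : Type*} [Fintype A] [Nonempty A]
    [TopologicalSpace A] [DiscreteTopology A]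
    (φ : (ℕ → A) → (ℕ → A))
    (hsbc : ∃ (n : ℕ) (d : (Fin n → A) → A), φ = tau d)
    (hlh : IsLocalHomeomorph φ)
    (hcomm : φ ∘ shift = shift ∘ φ)
    (hstar : ∀ y z : ℕ → A, shift y = φ z →
      ∃! x : ℕ → A, φ x = y ∧ shift x = z) :
    Function.Surjective φ ∧
    ∃ k : ℕ, ∀ y : ℕ → A, (φ ⁻¹' {y}).Finite ∧ (φ ⁻¹' {y}).ncard = k := by
  classical
  have hcont : Continuous φ := hlh.continuous
  have hopen : IsOpenMap φ := hlh.isOpenMap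
  have hloc : ∀ x : ℕ → A, ∃ U, IsOpen U ∧ x ∈ U ∧ Set.InjOn φ U := hlh.isLocallyInjective
  -- commutation pointwise, iterated
  have hcomm' : ∀ x, φ (shift x) = shift (φ x) := fun x => congrFun hcomm x
  have hcommn : ∀ n x, φ (shift^[n] x) = shift^[n] (φ x) := by
    intro n
    induction n with
    | zero => intro x; rfl
    | succ n ih =>
      intro x
      rw [Function.iterate_succ_apply, ih, hcomm']
      exact (Function.iterate_succ_apply shift n (φ x)).symm
  -- splice construction
  have splice_spec : ∀ (p y : ℕ → A) (L : ℕ),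
      ∃ u : ℕ → A, u ∈ cyl p L ∧ shift^[L] u = y := by
    intro p y L
    refine ⟨fun i => if i < L then p i else y (i - L), fun i hi => if_pos hi, ?_⟩
    funext i
    rw [shift_iterate_apply]
    simp
  -- Step: fibers are finite
  have hfin : ∀ y : ℕ → A, (φ ⁻¹' {y}).Finite := by
    intro y
    have hFc : IsCompact (φ ⁻¹' {y}) :=
      (IsClosed.preimage hcont isClosed_singleton).isCompact
    -- choose injectivity neighborhoods
    choose U hUo hUm hUi using hloc
    obtain ⟨t, ht⟩ := hFc.elim_finite_subcover (fun x : ℕ → A => U x)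
      (fun x => hUo x) (fun x hx => Set.mem_iUnion.mpr ⟨x, hUm x⟩)
    have hsub : φ ⁻¹' {y} ⊆ ⋃ x ∈ t, (φ ⁻¹' {y} ∩ U x) := by
      intro z hz
      obtain ⟨x, hxt, hzx⟩ := Set.mem_iUnion₂.mp (ht hz)
      exact Set.mem_iUnion₂.mpr ⟨x, hxt, hz, hzx⟩
    refine Set.Finite.subset (Set.Finite.biUnion t.finite_toSet fun x _ => ?_) hsub
    refine Set.Subsingleton.finite ?_
    rintro a ⟨ha1, ha2⟩ b ⟨hb1, hb2⟩
    exact hUi x ha2 hb2 (by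
      simp only [Set.mem_preimage, Set.mem_singleton_iff] at ha1 hb1
      rw [ha1, hb1])
  -- Step: the fiber count
  set c : (ℕ → A) → ℕ := fun y => (φ ⁻¹' {y}).ncard with hc
  -- Step: shift-invariance of the fiber count
  have hshift_inv : ∀ y : ℕ → A, c (shift y) = c y := by
    intro y
    have hbij : Set.BijOn shift (φ ⁻¹' {y}) (φ ⁻¹' {shift y}) := by
      refine ⟨?_, ?_, ?_⟩
      · intro x hx
        simp only [Set.mem_preimage, Set.mem_singleton_iff] at hx ⊢
        rw [hcomm' x, hx]
      · intro x hx x' hx' hxx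
        simp only [Set.mem_preimage, Set.mem_singleton_iff] at hx hx'
        have h1 : shift y = φ (shift x) := by rw [hcomm' x, hx]
        obtain ⟨w, _, huniq⟩ := hstar y (shift x) h1
        have e1 : x = w := huniq x ⟨hx, rfl⟩
        have e2 : x' = w := huniq x' ⟨hx', hxx.symm⟩
        rw [e1, e2]
      · intro z hz
        simp only [Set.mem_preimage, Set.mem_singleton_iff] at hz
        obtain ⟨x, ⟨hx1, hx2⟩, _⟩ := hstar y z hz.symm
        exact ⟨x, by simp [hx1], hx2⟩
    rw [hc]
    simp only
    rw [← hbij.image_eq, Set.ncard_image_of_injOn hbij.injOn]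
  have hshift_invn : ∀ (n : ℕ) (y : ℕ → A), c (shift^[n] y) = c y := by
    intro n
    induction n with
    | zero => intro y; rfl
    | succ n ih =>
      intro y
      rw [Function.iterate_succ_apply', hshift_inv, ih]
  -- Step: local constancy of the fiber count
  have hlocconst : ∀ y : ℕ → A, ∃ L, ∀ y' ∈ cyl y L, c y' = c y := by
    intro y
    have hF := hfin y
    set s : Finset (ℕ → A) := hF.toFinset with hs
    have hmem_s : ∀ x, x ∈ s ↔ φ x = y := by
      intro x; rw [hs, Set.Finite.mem_toFinset]; simp
    choose U hUo hUm hUi using hloc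
    -- a cylinder length for each fiber point
    have hLx : ∀ x : ℕ → A, ∃ L, cyl x L ⊆ U x := fun x => exists_cyl_subset (hUo x) (hUm x)
    choose Lx hLx using hLx
    -- separation index for pairs
    set g : (ℕ → A) → (ℕ → A) → ℕ := fun x x' =>
      if h : x ≠ x' then (Function.ne_iff.mp h).choose + 1 else 0 with hg
    set N : ℕ := max (s.sup Lx) (s.sup fun x => s.sup fun x' => g x x') with hN
    have hNLx : ∀ x ∈ s, cyl x N ⊆ U x := by
      intro x hx
      exact (cyl_antitone x (le_trans (Finset.le_sup hx) (le_max_left _ _))).trans (hLx x)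
    have hdisj : ∀ x ∈ s, ∀ x' ∈ s, x ≠ x' → Disjoint (cyl x N) (cyl x' N) := by
      intro x hx x' hx' hne
      rw [Set.disjoint_left]
      intro z hz hz'
      have hi := (Function.ne_iff.mp hne).choose_spec
      set i := (Function.ne_iff.mp hne).choose with hidef
      have h1 : g x x' ≤ s.sup (fun x'' => g x x'') := Finset.le_sup hx'
      have h2 : s.sup (fun x'' => g x x'') ≤ s.sup (fun x0 => s.sup fun x'' => g x0 x'') :=
        Finset.le_sup (f := fun x0 => s.sup fun x'' => g x0 x'') hx
      have hgval : g x x' = i + 1 := by rw [hg]; simp only; rw [dif_pos hne]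
      have hiN : i < N := by
        have hle : g x x' ≤ N := le_trans (h1.trans h2) (le_max_right _ _)
        rw [hgval] at hle
        omega
      exact hi ((hz i hiN).symm.trans (hz' i hiN))
    -- the open set where the count is ≥ and ≤
    have hyV : ∀ x ∈ s, y ∈ φ '' cyl x N := by
      intro x hx
      exact ⟨x, self_mem_cyl x N, (hmem_s x).mp hx⟩
    set V : Set (ℕ → A) := ⋂ x ∈ s, φ '' cyl x N with hV
    have hVopen : IsOpen V :=
      isOpen_biInter_finset fun x _ => hopen _ (isOpen_cyl x N)
    have hyVmem : y ∈ V := Set.mem_iInter₂.mpr hyV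
    set K : Set (ℕ → A) := (⋃ x ∈ s, cyl x N)ᶜ with hK
    have hKclosed : IsClosed K :=
      (isOpen_biUnion fun x _ => isOpen_cyl x N).isClosed_compl
    have hKimage_closed : IsClosed (φ '' K) :=
      (hKclosed.isCompact.image hcont).isClosed
    have hyW : y ∉ φ '' K := by
      rintro ⟨z, hzK, hzy⟩
      have hzs : z ∈ s := (hmem_s z).mpr hzy
      exact hzK (Set.mem_iUnion₂.mpr ⟨z, hzs, self_mem_cyl z N⟩)
    set W : Set (ℕ → A) := (φ '' K)ᶜ with hW
    obtain ⟨L, hL⟩ := exists_cyl_subset (hVopen.inter hKimage_closed.isOpen_compl)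
      (Set.mem_inter hyVmem hyW)
    refine ⟨L, fun y' hy' => ?_⟩
    have hy'V : y' ∈ V := (hL hy').1
    have hy'W : y' ∈ W := (hL hy').2
    -- for each x ∈ s, pick the preimage of y' in cyl x N
    have hpick : ∀ x ∈ s, ∃ z ∈ cyl x N, φ z = y' := by
      intro x hx
      obtain ⟨z, hz1, hz2⟩ := Set.mem_iInter₂.mp hy'V x hx
      exact ⟨z, hz1, hz2⟩
    choose ψ hψ1 hψ2 using hpick
    -- bijection between s and the fiber of y'
    have hbij : Set.BijOn (fun x => if h : x ∈ s then ψ x h else x) ↑s (φ ⁻¹' {y'}) := by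
      refine ⟨?_, ?_, ?_⟩
      · intro x hx
        simp only [Finset.mem_coe] at hx
        simp [Set.mem_preimage, dif_pos hx, hψ2 x hx]
      · intro x hx x' hx' heq
        simp only [Finset.mem_coe] at hx hx'
        simp only [dif_pos hx, dif_pos hx'] at heq
        by_contra hne
        exact Set.disjoint_left.mp (hdisj x hx x' hx' hne) (hψ1 x hx)
          (heq ▸ hψ1 x' hx')
      · intro z hz
        simp only [Set.mem_preimage, Set.mem_singleton_iff] at hz
        have hzK : z ∉ K := fun hzK => hy'W ⟨z, hzK, hz⟩
        have : z ∈ ⋃ x ∈ s, cyl x N := by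
          by_contra h; exact hzK h
        obtain ⟨x, hx, hzx⟩ := Set.mem_iUnion₂.mp this
        refine ⟨x, hx, ?_⟩
        simp only [dif_pos hx]
        exact hUi x ((hNLx x hx) (hψ1 x hx)) ((hNLx x hx) hzx)
          ((hψ2 x hx).trans hz.symm)
    have : c y' = s.card := by
      rw [hc]
      simp only
      rw [← hbij.image_eq, Set.ncard_image_of_injOn hbij.injOn, Set.ncard_coe_finset]
    rw [this, hc]
    simp only
    rw [Set.ncard_eq_toFinset_card _ hF]
  -- Surjectivity
  have hsurj : Function.Surjective φ := by
    intro y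
    have hrange : IsOpen (Set.range φ) := hopen.isOpen_range
    obtain ⟨p, hp⟩ : ∃ p, p ∈ Set.range φ := ⟨φ y, ⟨y, rfl⟩⟩
    obtain ⟨L, hL⟩ := exists_cyl_subset hrange hp
    obtain ⟨u, hu1, hu2⟩ := splice_spec p y L
    obtain ⟨x, hx⟩ := hL hu1
    exact ⟨shift^[L] x, by rw [hcommn, hx, hu2]⟩
  -- Constancy of the count
  refine ⟨hsurj, c (fun _ => Classical.arbitrary A), fun y => ⟨hfin y, ?_⟩⟩
  set y₀ : ℕ → A := fun _ => Classical.arbitrary A with hy₀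
  show c y = c y₀
  obtain ⟨L, hL⟩ := hlocconst y₀
  obtain ⟨u, hu1, hu2⟩ := splice_spec y₀ y L
  calc c y = c (shift^[L] u) := by rw [hu2]
    _ = c u := hshift_invn L u
    _ = c y₀ := hL u hu1
end
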